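/- Let F be a complex Borel measure on ℝ² (so its total variation measure |F| is finite) and define C : ℝ × ℝ → ℂ by C(s,t) = ∫_{ℝ²} e^{i(sλ − tλ')} dF(λ,λ'). Then C(s+h, t+h) = C(s,t) for all s, t, h ∈ ℝ if and only if F is concentrated on the diagonal, i.e. |F|({(λ,λ') ∈ ℝ² : λ ≠ λ'}) = 0. -/

import Mathlib

/-!
Shifting both time arguments by `h` multiplies the integrand by `e^{ih(λ - λ')}`, so
stationarity says that the complex measure `(e^{ih(λ - λ')} - 1) dF` has vanishing Fourier
transform. By uniqueness of characteristic functions it vanishes, i.e. `e^{ih(λ - λ')} = 1`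
for `|F|`-almost every point. Taking `h = 1` and `h = 2π` forces `λ - λ' ∈ 2πℤ ∩ ℤ = {0}`,
because `π` is irrational.
-/

open MeasureTheory Real Complex ComplexConjugate

theorem MeasureTheory.Integrable.exp_ofReal_mul_I_mul {α : Type*} [MeasurableSpace α]
    {μ : Measure α} {g : α → ℂ} (hg : Integrable g μ) {φ : α → ℝ} (hφ : AEMeasurable φ μ) :
    Integrable (fun x ↦ exp (φ x * I) * g x) μ :=
  hg.bdd_mul (c := 1) (by fun_prop) (.of_forall fun x ↦ (norm_exp_ofReal_mul_I _).le)

section FourierUniqueness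

variable {E : Type*} [NormedAddCommGroup E] [NormedSpace ℝ E] [CompleteSpace E]
  [SecondCountableTopology E] [MeasurableSpace E] [BorelSpace E] {ν : Measure E}

theorem ae_eq_zero_of_forall_integral_exp_mul_ofReal_eq_zero {H : E → ℝ} (hH : Integrable H ν)
    (h : ∀ L : StrongDual ℝ E, ∫ x, exp (L x * I) * H x ∂ν = 0) : H =ᵐ[ν] 0 := by
  -- `H⁺ ν` and `H⁻ ν` are finite measures with the same characteristic function.
  have hH' : Integrable (fun x ↦ -H x) ν := hH.neg
  have := isFiniteMeasure_withDensity_ofReal hH.2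
  have := isFiniteMeasure_withDensity_ofReal hH'.2
  have hchar : charFunDual (ν.withDensity fun x ↦ .ofReal (H x)) =
      charFunDual (ν.withDensity fun x ↦ .ofReal (-H x)) := by
    ext L
    have hL : AEMeasurable (fun x ↦ L x) ν := L.continuous.aemeasurable
    rw [charFunDual_apply, charFunDual_apply,
      integral_withDensity_eq_integral_toReal_smul₀ hH.1.aemeasurable.ennreal_ofReal,
      integral_withDensity_eq_integral_toReal_smul₀ hH'.1.aemeasurable.ennreal_ofReal,
      ← sub_eq_zero, ← integral_sub, ← h L]
    · congr with x
      simp only [ENNReal.toReal_ofReal', real_smul]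
      rw [← sub_mul, ← ofReal_sub, max_zero_sub_eq_self, mul_comm]
    · simp only [ENNReal.toReal_ofReal', real_smul, mul_comm (ofReal (max _ 0))]
      exact hH.pos_part.ofReal.exp_ofReal_mul_I_mul hL
    · simp only [ENNReal.toReal_ofReal', real_smul, mul_comm (ofReal (max _ 0))]
      exact hH'.pos_part.ofReal.exp_ofReal_mul_I_mul hL
    all_goals exact .of_forall fun _ ↦ ENNReal.ofReal_lt_top
  have hdens := (withDensity_eq_iff hH.1.aemeasurable.ennreal_ofReal
    hH'.1.aemeasurable.ennreal_ofReal (by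
      rw [← setLIntegral_univ, ← withDensity_apply _ .univ]; exact measure_ne_top _ _)).1
    (Measure.ext_of_charFunDual hchar)
  filter_upwards [hdens] with x hx
  calc H x = (ENNReal.ofReal (H x)).toReal - (ENNReal.ofReal (-H x)).toReal := by
        rw [ENNReal.toReal_ofReal', ENNReal.toReal_ofReal', max_zero_sub_eq_self]
    _ = 0 := by rw [hx, sub_self]

theorem ae_eq_zero_of_forall_integral_exp_mul_eq_zero {G : E → ℂ} (hG : Integrable G ν)
    (h : ∀ L : StrongDual ℝ E, ∫ x, exp (L x * I) * G x ∂ν = 0) : G =ᵐ[ν] 0 := by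
  have hGc : Integrable (fun x ↦ conj (G x)) ν :=
    memLp_one_iff_integrable.1 (memLp_one_iff_integrable.2 hG).star
  have hint : ∀ L : StrongDual ℝ E, Integrable (fun x ↦ exp (L x * I) * G x) ν :=
    fun L ↦ hG.exp_ofReal_mul_I_mul L.continuous.aemeasurable
  have hintc : ∀ L : StrongDual ℝ E, Integrable (fun x ↦ exp (L x * I) * conj (G x)) ν :=
    fun L ↦ hGc.exp_ofReal_mul_I_mul L.continuous.aemeasurable
  -- Conjugation turns the character of `-L` into that of `L`.
  have hconj : ∀ L : StrongDual ℝ E, ∫ x, exp (L x * I) * conj (G x) ∂ν = 0 := by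
    intro L
    have : ∀ x, exp (L x * I) * conj (G x) = conj (exp ((-L) x * I) * G x) := fun x ↦ by
      rw [map_mul, ← exp_conj, map_mul, conj_ofReal, conj_I]
      simp
    simp_rw [this, integral_conj, h, map_zero]
  have hre : (fun x ↦ (G x).re) =ᵐ[ν] 0 := by
    refine ae_eq_zero_of_forall_integral_exp_mul_ofReal_eq_zero hG.re fun L ↦ ?_
    simp_rw [re_eq_add_conj, mul_div_assoc', mul_add]
    rw [integral_div, integral_add (hint L) (hintc L), h, hconj, add_zero, zero_div]
  have him : (fun x ↦ (G x).im) =ᵐ[ν] 0 := by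
    refine ae_eq_zero_of_forall_integral_exp_mul_ofReal_eq_zero hG.im fun L ↦ ?_
    simp_rw [im_eq_sub_conj, mul_div_assoc', mul_sub]
    rw [integral_div, integral_sub (hint L) (hintc L), h, hconj, sub_zero, zero_div]
  filter_upwards [hre, him] with x hre him
  exact Complex.ext hre him

end FourierUniqueness

theorem ae_eq_zero_of_forall_integral_exp_I_mul_sub_eq_zero {ν : Measure (ℝ × ℝ)}
    {G : ℝ × ℝ → ℂ} (hG : Integrable G ν)
    (h : ∀ s t : ℝ, ∫ x, exp (I * ↑(s * x.1 - t * x.2)) * G x ∂ν = 0) : G =ᵐ[ν] 0 := by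
  refine ae_eq_zero_of_forall_integral_exp_mul_eq_zero hG fun L ↦ ?_
  have hL : ∀ x : ℝ × ℝ, L x = L (1, 0) * x.1 - -L (0, 1) * x.2 := fun x ↦ by
    have hx : x = x.1 • ((1, 0) : ℝ × ℝ) + x.2 • ((0, 1) : ℝ × ℝ) := by ext <;> simp
    conv_lhs => rw [hx, map_add, map_smul, map_smul, smul_eq_mul, smul_eq_mul]
    ring
  refine (integral_congr_ae (.of_forall fun x ↦ ?_)).trans (h (L (1, 0)) (-L (0, 1)))
  rw [hL x, mul_comm I]

theorem eq_zero_of_exp_I_mul_eq_one_of_exp_I_mul_two_pi_mul_eq_one {d : ℝ}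
    (h₁ : exp (I * d) = 1) (h₂ : exp (I * ↑(2 * π * d)) = 1) : d = 0 := by
  obtain ⟨n, hn⟩ := exp_eq_one_iff.1 h₁
  obtain ⟨m, hm⟩ := exp_eq_one_iff.1 h₂
  have hdn : d = 2 * π * n := by simpa [mul_comm] using congrArg im hn
  have hdm : d = m := by simpa [mul_comm, Real.pi_ne_zero] using congrArg im hm
  by_contra hd
  have hn0 : n ≠ 0 := by rintro rfl; simp [hdn] at hd
  exact ((irrational_pi.intCast_mul (m := 2) two_ne_zero).mul_intCast hn0).ne_int m
    (by push_cast; rw [← hdn, hdm])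

theorem ae_exp_I_mul_sub_eq_one_of_forall_integral_shift_eq {μ : Measure (ℝ × ℝ)}
    {f : ℝ × ℝ → ℂ} (hf : Integrable f μ) (hf0 : ∀ x, f x ≠ 0) (h : ℝ)
    (hshift : ∀ s t : ℝ, ∫ x, exp (I * ↑((s + h) * x.1 - (t + h) * x.2)) * f x ∂μ =
      ∫ x, exp (I * ↑(s * x.1 - t * x.2)) * f x ∂μ) :
    ∀ᵐ x ∂μ, exp (I * ↑(h * (x.1 - x.2))) = 1 := by
  have hint : ∀ {φ : ℝ × ℝ → ℝ}, Measurable φ → Integrable (fun x ↦ exp (I * φ x) * f x) μ :=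
    fun hφ ↦ by simpa only [mul_comm I] using hf.exp_ofReal_mul_I_mul hφ.aemeasurable
  have hG : (fun x ↦ (exp (I * ↑(h * (x.1 - x.2))) - 1) * f x) =ᵐ[μ] 0 := by
    refine ae_eq_zero_of_forall_integral_exp_I_mul_sub_eq_zero
      (by simpa only [sub_mul, one_mul, Pi.sub_def] using (hint (by fun_prop)).sub hf)
      fun s t ↦ ?_
    rw [← sub_eq_zero.2 (hshift s t), ← integral_sub (hint (by fun_prop)) (hint (by fun_prop))]
    congr with x
    rw [show (s + h) * x.1 - (t + h) * x.2 = (s * x.1 - t * x.2) + h * (x.1 - x.2) by ring,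
      ofReal_add, mul_add, Complex.exp_add]
    ring
  filter_upwards [hG] with x hx
  exact sub_eq_zero.1 ((mul_eq_zero.1 hx).resolve_right (hf0 x))

/-- The complex measure `F` is encoded by its polar decomposition `dF = f dμ`, where
`μ = |F|` and `f` is a measurable density of modulus one. -/
theorem stmt17 (μ : Measure (ℝ × ℝ)) [IsFiniteMeasure μ]
    (f : ℝ × ℝ → ℂ) (hf_meas : Measurable f) (hf : ∀ x, ‖f x‖ = 1)
    (C : ℝ → ℝ → ℂ)
    (hC : ∀ s t : ℝ, C s t =
      ∫ x : ℝ × ℝ, Complex.exp (Complex.I * ((s * x.1 - t * x.2 : ℝ) : ℂ)) * f x ∂μ) :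
    (∀ s t h : ℝ, C (s + h) (t + h) = C s t) ↔ μ {x : ℝ × ℝ | x.1 ≠ x.2} = 0 := by
  have hf_int : Integrable f μ := .of_bound hf_meas.aestronglyMeasurable 1 (.of_forall (hf · |>.le))
  have hf0 : ∀ x, f x ≠ 0 := fun x h0 ↦ by simpa [h0] using hf x
  rw [← ae_iff]
  constructor
  · intro hstat
    have hexp : ∀ h : ℝ, ∀ᵐ x ∂μ, exp (I * ↑(h * (x.1 - x.2))) = 1 := fun h ↦
      ae_exp_I_mul_sub_eq_one_of_forall_integral_shift_eq hf_int hf0 h fun s t ↦ by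
        rw [← hC, ← hC, hstat]
    filter_upwards [hexp 1, hexp (2 * π)] with x h₁ h₂
    refine sub_eq_zero.1 (eq_zero_of_exp_I_mul_eq_one_of_exp_I_mul_two_pi_mul_eq_one ?_ ?_)
    · simpa only [one_mul] using h₁
    · simpa only [mul_assoc] using h₂
  · intro hdiag s t h
    rw [hC, hC]
    refine integral_congr_ae ?_
    filter_upwards [hdiag] with x hx
    rw [hx]
    ring_nf
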